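/- Let L/K be a Galois field extension. The restriction homomorphisms Gal(L/K) → Gal(F/K), where F ranges over the intermediate fields of L/K that are finite Galois extensions of K, induce an isomorphism of topological groups from Gal(L/K), equipped with the Krull topology, onto the inverse limit of the system of finite discrete groups Gal(F/K) with transition maps given by restriction. -/

import Mathlib

/-- The index set for the inverse limit: intermediate fields of `L/K` that are finite
Galois extensions of `K`. -/
def FinGalIdx (K L : Type*) [Field K] [Field L] [Algebra K L] :=
  {F : IntermediateField K L // FiniteDimensional K F ∧ IsGalois K F}

/-- The restriction homomorphism `Gal(L/K) →* Gal(F/K)` for a finite Galois intermediate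
field `F`. -/
noncomputable def galRes (K L : Type*) [Field K] [Field L] [Algebra K L]
    (F : FinGalIdx K L) : (L ≃ₐ[K] L) →* (F.1 ≃ₐ[K] F.1) :=
  haveI : IsGalois K F.1 := F.2.2
  AlgEquiv.restrictNormalHom F.1

/-- The inverse limit of the finite Galois groups `Gal(F/K)`: the subgroup of the product
`∏ F, Gal(F/K)` consisting of the families compatible with the restriction maps
`Gal(F'/K) → Gal(F/K)` for `F ⊆ F'`. -/
def galLimit (K L : Type*) [Field K] [Field L] [Algebra K L] :
    Subgroup (∀ F : FinGalIdx K L, (F.1 ≃ₐ[K] F.1)) where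
  carrier := {x | ∀ (F F' : FinGalIdx K L) (h : F.1 ≤ F'.1) (a : F.1),
      ((x F') ⟨(a : L), h a.2⟩ : L) = ((x F) a : L)}
  one_mem' := by intro F F' h a; rfl
  mul_mem' := by
    intro x y hx hy F F' h a
    have h1 : y F' ⟨(a : L), h a.2⟩ = ⟨((y F) a : L), h ((y F) a).2⟩ :=
      Subtype.ext (hy F F' h a)
    show ((x F') ((y F') ⟨(a : L), h a.2⟩) : L) = ((x F) ((y F) a) : L)
    rw [h1]
    exact hx F F' h ((y F) a)
  inv_mem' := by
    intro x hx F F' h a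
    have key : x F' ⟨(((x F)⁻¹ a : F.1) : L), h ((x F)⁻¹ a).2⟩ = ⟨(a : L), h a.2⟩ := by
      apply Subtype.ext
      have h2 := hx F F' h ((x F)⁻¹ a)
      have h3 : (x F) ((x F)⁻¹ a) = a := (x F).apply_symm_apply a
      rw [h3] at h2
      exact h2
    have key2 : (x F')⁻¹ ⟨(a : L), h a.2⟩ = ⟨(((x F)⁻¹ a : F.1) : L), h ((x F)⁻¹ a).2⟩ := by
      rw [← key]
      exact (x F').symm_apply_apply _
    show ((x F')⁻¹ ⟨(a : L), h a.2⟩ : L) = (((x F)⁻¹ a : F.1) : L)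
    rw [key2]

/-!
The fixed-field hypothesis makes `L/K` Galois: the `Gal(L/K)`-orbit of any `x` consists of roots
of its minimal polynomial, so `K(orbit of x)` is a finite subextension stable under every
automorphism. Every automorphism of `L` restricts to it, so its fixed field lies in that of
`Gal(L/K)`, which is `K`; hence it is Galois, and `L` is the union of these.
For Galois `L/K`, Mathlib identifies `Gal(L/K)` with the limit of the finite Galois groups over
`FiniteGaloisIntermediateField K L`; that limit is `galLimit K L` re-indexed, both compatibility
conditions expressing the same restriction maps.
-/

open Opposite IntermediateField InfiniteGalois

section FixedField

variable {K L : Type*} [Field K] [Field L] [Algebra K L]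

theorem isGalois_of_forall_exists_isGalois_mem
    (h : ∀ x : L, ∃ E : IntermediateField K L, IsGalois K E ∧ x ∈ E) : IsGalois K L := by
  choose E hE hxE using h
  have hsup : ⨆ x, E x = ⊤ := eq_top_iff.mpr fun x _ => le_iSup E x (hxE x)
  have hgal : IsGalois K ↥(⨆ x, E x) := ⟨⟩
  rw [hsup] at hgal
  exact isGalois_iff_isGalois_top.mp hgal

theorem IsIntegral.finite_range_algEquiv_apply {x : L} (hx : IsIntegral K x) :
    (Set.range fun σ : L ≃ₐ[K] L => σ x).Finite := by
  refine ((minpoly K x).rootSet_finite L).subset ?_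
  rintro _ ⟨σ, rfl⟩
  exact Polynomial.mem_rootSet.mpr ⟨minpoly.ne_zero hx, by simp [Polynomial.aeval_algEquiv]⟩

theorem map_adjoin_range_algEquiv_apply (x : L) (σ : L ≃ₐ[K] L) :
    (adjoin K (Set.range fun τ : L ≃ₐ[K] L => τ x)).map (σ : L →ₐ[K] L) =
      adjoin K (Set.range fun τ : L ≃ₐ[K] L => τ x) := by
  rw [adjoin_map, ← Set.range_comp]
  exact congrArg _ ((Equiv.mulLeft σ).surjective.range_comp fun τ => τ x)

theorem isGalois_of_forall_map_eq (hfixed : fixedField (⊤ : Subgroup (L ≃ₐ[K] L)) = ⊥)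
    (E : IntermediateField K L) [FiniteDimensional K E]
    (hE : ∀ σ : L ≃ₐ[K] L, E.map (σ : L →ₐ[K] L) = E) : IsGalois K E := by
  refine IsGalois.of_fixedField_eq_bot K E (eq_bot_iff.mpr fun y hy => ?_)
  have hy_fixed : (y : L) ∈ fixedField (⊤ : Subgroup (L ≃ₐ[K] L)) := by
    rintro ⟨σ, -⟩
    let σE : E ≃ₐ[K] E := (intermediateFieldMap σ E).trans (equivOfEq (hE σ))
    exact congrArg Subtype.val (hy ⟨σE, Subgroup.mem_top σE⟩)
  rw [hfixed, mem_bot] at hy_fixed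
  obtain ⟨c, hc⟩ := hy_fixed
  exact mem_bot.mpr ⟨c, Subtype.ext hc⟩

theorem IsIntegral.exists_isGalois_mem (hfixed : fixedField (⊤ : Subgroup (L ≃ₐ[K] L)) = ⊥)
    {x : L} (hx : IsIntegral K x) : ∃ E : IntermediateField K L, IsGalois K E ∧ x ∈ E := by
  have := hx.finite_range_algEquiv_apply.to_subtype
  have : FiniteDimensional K (adjoin K (Set.range fun τ : L ≃ₐ[K] L => τ x)) :=
    finiteDimensional_adjoin fun _ ⟨τ, hτ⟩ => hτ ▸ hx.map τ
  exact ⟨_, isGalois_of_forall_map_eq hfixed _ (map_adjoin_range_algEquiv_apply x),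
    subset_adjoin K _ ⟨1, rfl⟩⟩

theorem isGalois_of_fixedField_top_eq_bot [Algebra.IsAlgebraic K L]
    (hfixed : fixedField (⊤ : Subgroup (L ≃ₐ[K] L)) = ⊥) : IsGalois K L :=
  isGalois_of_forall_exists_isGalois_mem fun x =>
    (Algebra.IsIntegral.isIntegral x).exists_isGalois_mem hfixed

end FixedField

section Limit

variable {K L : Type*} [Field K] [Field L] [Algebra K L]

def FinGalIdx.toFiniteGaloisIntermediateField (F : FinGalIdx K L) :
    FiniteGaloisIntermediateField K L :=
  haveI := F.2.1; haveI := F.2.2; ⟨F.1⟩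

def FinGalIdx.ofFiniteGaloisIntermediateField (F : FiniteGaloisIntermediateField K L) :
    FinGalIdx K L :=
  ⟨F, inferInstance, inferInstance⟩

open FinGalIdx

def galLimitToProfiniteLimit (x : galLimit K L) :
    ProfiniteGrp.limit (asProfiniteGaloisGroupFunctor K L) :=
  ⟨fun F => x.1 (ofFiniteGaloisIntermediateField F.unop), by
    rintro ⟨F₁⟩ ⟨F₂⟩ ⟨⟨⟨h⟩⟩⟩
    let : Algebra F₂ F₁ := RingHom.toAlgebra (Subsemiring.inclusion h)
    have : IsScalarTower K F₂ F₁ := IsScalarTower.of_algebraMap_eq (congrFun rfl)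
    refine AlgEquiv.ext fun a => Subtype.ext ?_
    let σ : F₁ ≃ₐ[K] F₁ := x.1 (ofFiniteGaloisIntermediateField F₁)
    exact (congrArg (algebraMap F₁ L) (AlgEquiv.restrictNormal_commutes σ F₂ a)).trans
      (x.2 (ofFiniteGaloisIntermediateField F₂) (ofFiniteGaloisIntermediateField F₁) h a)⟩

def profiniteLimitToGalLimit (g : ProfiniteGrp.limit (asProfiniteGaloisGroupFunctor K L)) :
    galLimit K L :=
  ⟨fun F => g.1 (op F.toFiniteGaloisIntermediateField), fun F F' h a =>
    (proj_of_le F.toFiniteGaloisIntermediateField g a F'.toFiniteGaloisIntermediateField h).symm⟩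

variable (K L) in
noncomputable def galLimitEquivProfiniteLimit :
    galLimit K L ≃ₜ* ProfiniteGrp.limit (asProfiniteGaloisGroupFunctor K L) where
  toFun := galLimitToProfiniteLimit
  invFun := profiniteLimitToGalLimit
  left_inv _ := rfl
  right_inv _ := rfl
  map_mul' _ _ := rfl
  -- every factor is discrete: `Gal(F/K)` carries the Krull topology of a finite extension,
  -- and the factors of the profinite limit carry `⊥`
  continuous_toFun := by
    refine Continuous.subtype_mk (continuous_pi fun F => ⟨fun s _ => ?_⟩) _
    have hF : Continuous fun x : galLimit K L => x.1 (ofFiniteGaloisIntermediateField F.unop) :=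
      (continuous_apply _).comp continuous_subtype_val
    exact hF.isOpen_preimage s (isOpen_discrete (α := Gal(F.unop.toIntermediateField/K)) s)
  continuous_invFun := by
    refine Continuous.subtype_mk (continuous_pi fun F => ⟨fun s _ => ?_⟩) _
    have hF : Continuous fun g : ProfiniteGrp.limit (asProfiniteGaloisGroupFunctor K L) =>
        g.1 (op F.toFiniteGaloisIntermediateField) :=
      (continuous_apply _).comp continuous_subtype_val
    exact hF.isOpen_preimage s trivial

end Limit

/-- For a Galois extension `L/K` (an algebraic extension such that the fixed field of the
automorphism group is exactly `K`), the restriction homomorphisms to the finite Galois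
subextensions induce an isomorphism of topological groups from `Gal(L/K)`, with the Krull
topology, onto the inverse limit of the finite (discrete) groups `Gal(F/K)`. -/
theorem galoisGroup_isomorphic_to_invLimit_of_finite_galois_groups
    (K L : Type*) [Field K] [Field L] [Algebra K L] [Algebra.IsAlgebraic K L]
    (hfixed : IntermediateField.fixedField (⊤ : Subgroup (L ≃ₐ[K] L)) = ⊥) :
    ∃ e : (L ≃ₐ[K] L) ≃* galLimit K L,
      Continuous e ∧ Continuous e.symm ∧
      ∀ (σ : L ≃ₐ[K] L) (F : FinGalIdx K L), (e σ).1 F = galRes K L F σ := by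
  have : IsGalois K L := isGalois_of_fixedField_top_eq_bot hfixed
  let e := (continuousMulEquivToLimit K L).trans (galLimitEquivProfiniteLimit K L).symm
  exact ⟨e.toMulEquiv, e.continuous, e.symm.continuous, fun σ F => rfl⟩
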